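/- arXiv:2506.13520 — 5 statements merged into one kernel-verified Lean document; each statement's English description precedes it below -/
import Mathlib

section
/- Let g(w) = ρ₁w + ρ₂w², let ζ = ω' − E[ω'|x'], and suppose σ(z) ⊆ σ(x') and E[ζ² | z] = σ² a.s. for a constant σ². Then E[g(ω') | z] = E[g̃(E[ω'|x']) | z] a.s., where g̃(w) = g(w) + ρ₂σ². -/
/-! Writing `W = E[ω' | x']` and `ζ = ω' - W`, we have `ω'² = W² + 2 W ζ + ζ²`, and the cross
term has zero conditional expectation since `E[W ζ | x'] = W E[ζ | x'] = 0`. Conditioning on the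
coarser `z` therefore gives `E[ω'² | z] = E[W² | z] + E[ζ² | z] = E[W² + σ² | z]`, while
`E[ω' | z] = E[W | z]` by the tower property; the claim follows by linearity. -/

open MeasureTheory Filter

noncomputable def ce {Ω : Type*} {m0 : MeasurableSpace Ω} (m : MeasurableSpace Ω)
    (μ : @Measure Ω m0) (f : Ω → ℝ) : Ω → ℝ := μ[f|m]

namespace MeasureTheory

variable {Ω : Type*} {m m' m₀ : MeasurableSpace Ω} {μ : Measure[m₀] Ω}

theorem condExp_const_mul_add_const_mul {f g : Ω → ℝ} (c d : ℝ)
    (hf : Integrable f μ) (hg : Integrable g μ) :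
    μ[fun a => c * f a + d * g a|m] =ᵐ[μ] fun a => c * μ[f|m] a + d * μ[g|m] a := by
  change μ[c • f + d • g|m] =ᵐ[μ] _
  filter_upwards [condExp_add (hf.smul c) (hg.smul d) m, condExp_smul c f m,
    condExp_smul d g m] with a h_add h_c h_d
  rw [h_add, Pi.add_apply, h_c, h_d]
  rfl

theorem condExp_add_const [IsFiniteMeasure μ] (hm : m ≤ m₀) {f : Ω → ℝ} (hf : Integrable f μ)
    (c : ℝ) : μ[fun a => f a + c|m] =ᵐ[μ] fun a => μ[f|m] a + c := by
  filter_upwards [condExp_add hf (integrable_const c) m] with a h_add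
  rw [show (fun a => f a + c) = f + fun _ => c from rfl, h_add, Pi.add_apply, condExp_const hm]

theorem condExp_sub_condExp (hm : m ≤ m₀) [SigmaFinite (μ.trim hm)] {f : Ω → ℝ}
    (hf : Integrable f μ) : μ[f - μ[f|m]|m] =ᵐ[μ] 0 := by
  filter_upwards [condExp_sub hf integrable_condExp m] with a h_sub
  rw [h_sub, Pi.sub_apply,
    condExp_of_stronglyMeasurable hm stronglyMeasurable_condExp integrable_condExp, sub_self]
  rfl

theorem condExp_mul_sub_condExp (hm : m ≤ m₀) [SigmaFinite (μ.trim hm)] {f g : Ω → ℝ}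
    (hg : StronglyMeasurable[m] g) (hf : Integrable f μ) (hgf : Integrable (g * (f - μ[f|m])) μ) :
    μ[g * (f - μ[f|m])|m] =ᵐ[μ] 0 := by
  filter_upwards [condExp_mul_of_stronglyMeasurable_left hg hgf (hf.sub integrable_condExp),
    condExp_sub_condExp hm hf] with a h_pull h_zero
  simp [h_pull, h_zero]

theorem condExp_sq_ae_eq_condExp_sq_condExp_add_condExp_sq_sub [IsFiniteMeasure μ]
    (hm' : m' ≤ m) (hm : m ≤ m₀) {f : Ω → ℝ} (hf : MemLp f 2 μ) :
    μ[fun a => f a ^ 2|m'] =ᵐ[μ]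
      fun a => μ[fun a => μ[f|m] a ^ 2|m'] a + μ[fun a => (f a - μ[f|m] a) ^ 2|m'] a := by
  set W := μ[f|m]
  have hW : MemLp W 2 μ := hf.condExp one_le_two
  have hζ : MemLp (f - W) 2 μ := hf.sub hW
  have hW_sq : Integrable (fun a => W a ^ 2) μ := hW.integrable_sq
  have hζ_sq : Integrable (fun a => (f a - W a) ^ 2) μ := hζ.integrable_sq
  have h_cross : Integrable (W * (f - W)) μ := hW.integrable_mul hζ
  have h_cross_zero : μ[W * (f - W)|m'] =ᵐ[μ] 0 :=
    (condExp_condExp_of_le hm' hm).symm.trans <| (condExp_congr_ae <| condExp_mul_sub_condExp hm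
      stronglyMeasurable_condExp (hf.integrable one_le_two) h_cross).trans (by rw [condExp_zero])
  have h_expand : (fun a => f a ^ 2)
      = ((fun a => W a ^ 2) + fun a => (f a - W a) ^ 2) + (2 : ℝ) • (W * (f - W)) := by
    funext a
    simp only [Pi.add_apply, Pi.smul_apply, Pi.mul_apply, Pi.sub_apply, smul_eq_mul]
    ring
  rw [h_expand]
  filter_upwards [condExp_add (hW_sq.add hζ_sq) (h_cross.smul (2 : ℝ)) m',
    condExp_add hW_sq hζ_sq m', condExp_smul (2 : ℝ) (W * (f - W)) m',
    h_cross_zero] with a h_add h_add' h_smul h_zero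
  rw [h_add, Pi.add_apply, h_add', h_smul, Pi.smul_apply, h_zero]
  simp

end MeasureTheory

theorem stmt5_general {Ω : Type*} [F : MeasurableSpace Ω] {μ : Measure Ω} [IsProbabilityMeasure μ]
    (mz mx : MeasurableSpace Ω) (hzx : mz ≤ mx) (hmx : mx ≤ F)
    (ω' : Ω → ℝ) (hω' : MemLp ω' 2 μ) (ρ₁ ρ₂ σ2 : ℝ)
    (hζ : ce mz μ (fun a => (ω' a - ce mx μ ω' a) ^ 2) =ᵐ[μ] fun _ => σ2) :
    ce mz μ (fun a => ρ₁ * ω' a + ρ₂ * (ω' a) ^ 2)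
      =ᵐ[μ] ce mz μ (fun a => (ρ₁ * ce mx μ ω' a + ρ₂ * (ce mx μ ω' a) ^ 2) + ρ₂ * σ2) := by
  unfold ce at hζ ⊢
  set W := μ[ω'|mx]
  have hW : MemLp W 2 μ := hω'.condExp one_le_two
  have h_mean : μ[W|mz] =ᵐ[μ] μ[ω'|mz] := condExp_condExp_of_le hzx hmx
  have h_sq : μ[fun a => W a ^ 2 + σ2|mz] =ᵐ[μ] μ[fun a => ω' a ^ 2|mz] := by
    filter_upwards [condExp_add_const (hzx.trans hmx) hW.integrable_sq σ2, hζ,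
      condExp_sq_ae_eq_condExp_sq_condExp_add_condExp_sq_sub hzx hmx hω']
      with a h_const h_σ h_pyth
    rw [h_const, h_pyth, h_σ]
  have h_regroup : (fun a => (ρ₁ * W a + ρ₂ * W a ^ 2) + ρ₂ * σ2)
      = fun a => ρ₁ * W a + ρ₂ * (W a ^ 2 + σ2) := by
    funext a
    ring
  rw [h_regroup]
  filter_upwards [
    condExp_const_mul_add_const_mul ρ₁ ρ₂ (hω'.integrable one_le_two) hω'.integrable_sq,
    condExp_const_mul_add_const_mul (g := fun a => W a ^ 2 + σ2) ρ₁ ρ₂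
      (hW.integrable one_le_two) (hW.integrable_sq.add (integrable_const σ2)),
    h_mean, h_sq] with a h_lhs h_rhs h_W h_W2
  rw [h_lhs, h_rhs, h_W, h_W2]

/-- Quadratic law of motion g(w) = ρ₁w + ρ₂w², ζ = ω' − E[ω'|x'], σ(z) ⊆ σ(x'),
E[ζ²|z] = σ² a.s.: then E[g(ω')|z] = E[g̃(E[ω'|x'])|z] a.s. where g̃(w) = g(w) + ρ₂σ². -/
theorem stmt5 {Ω : Type*} [F : MeasurableSpace Ω] {μ : Measure Ω} [IsProbabilityMeasure μ]
    (mz mx : MeasurableSpace Ω) (hzx : mz ≤ mx) (hmx : mx ≤ F)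
    (ω' : Ω → ℝ) (hω' : MemLp ω' 2 μ) (ρ₁ ρ₂ σ2 : ℝ)
    (hW2 : Integrable (fun a => (ce mx μ ω' a) ^ 2) μ)
    (hζ : ce mz μ (fun a => (ω' a - ce mx μ ω' a) ^ 2) =ᵐ[μ] fun _ => σ2) :
    ce mz μ (fun a => ρ₁ * ω' a + ρ₂ * (ω' a) ^ 2)
      =ᵐ[μ] ce mz μ (fun a => (ρ₁ * ce mx μ ω' a + ρ₂ * (ce mx μ ω' a) ^ 2) + ρ₂ * σ2) :=
  stmt5_general (F := F) mz mx hzx hmx ω' hω' ρ₁ ρ₂ σ2 hζ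
end

section
/- Second-order bound on the violation of the moment condition: if σ(z) ⊆ σ(x'), g is twice continuously differentiable with |g''| ≤ τ everywhere, and ζ = ω' − E[ω'|x'] is square-integrable, then E[ |E[g(ω') | z] − E[g(E[ω'|x']) | z]| ] ≤ τ · E[ζ²]. -/
open MeasureTheory Filter

section Taylor

variable {g : ℝ → ℝ} {τ : ℝ}

theorem abs_deriv_sub_deriv_le (hg : Differentiable ℝ (deriv g))
    (hτ : ∀ w, |deriv (deriv g) w| ≤ τ) (x y : ℝ) :
    |deriv g x - deriv g y| ≤ τ * |x - y| := by
  simpa [Real.norm_eq_abs] using Convex.norm_image_sub_le_of_norm_deriv_le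
    (fun t _ => hg t) (fun t _ => hτ t) convex_univ (Set.mem_univ y) (Set.mem_univ x)

theorem abs_sub_sub_deriv_mul_le (hg : Differentiable ℝ g) (hg' : Differentiable ℝ (deriv g))
    (hτ : ∀ w, |deriv (deriv g) w| ≤ τ) (x y : ℝ) :
    |g x - g y - deriv g y * (x - y)| ≤ τ * (x - y) ^ 2 := by
  have hτ0 : 0 ≤ τ := (abs_nonneg _).trans (hτ 0)
  -- mean value theorem for `t ↦ g t - g' y * t`, whose derivative is at most `τ |x - y|` on `[y, x]`
  have hderiv (t : ℝ) : HasDerivAt (fun t => g t - deriv g y * t) (deriv g t - deriv g y) t := by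
    simpa using (hg t).hasDerivAt.fun_sub ((hasDerivAt_id t).const_mul (deriv g y))
  have hbound : ∀ t ∈ Set.uIcc y x, ‖deriv g t - deriv g y‖ ≤ τ * |x - y| := fun t ht =>
    (abs_deriv_sub_deriv_le hg' hτ t y).trans
      (mul_le_mul_of_nonneg_left (Set.abs_sub_left_of_mem_uIcc ht) hτ0)
  have hmvt := Convex.norm_image_sub_le_of_norm_hasDerivWithin_le
    (fun t _ => (hderiv t).hasDerivWithinAt) hbound (convex_uIcc y x)
    Set.left_mem_uIcc Set.right_mem_uIcc
  calc |g x - g y - deriv g y * (x - y)|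
      = ‖(g x - deriv g y * x) - (g y - deriv g y * y)‖ := by rw [Real.norm_eq_abs]; ring_nf
    _ ≤ τ * |x - y| * ‖x - y‖ := hmvt
    _ = τ * (x - y) ^ 2 := by rw [Real.norm_eq_abs, mul_assoc, ← sq, sq_abs]

end Taylor

section CondExp

variable {Ω : Type*} {m m' m₀ : MeasurableSpace Ω} {μ : Measure Ω}

theorem condExp_sub_condExp_ae_eq_zero (hm : m ≤ m₀) [SigmaFinite (μ.trim hm)] {f : Ω → ℝ}
    (hf : Integrable f μ) : μ[f - μ[f|m]|m] =ᵐ[μ] 0 := by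
  filter_upwards [condExp_sub hf (integrable_condExp : Integrable μ[f|m] μ) m,
    condExp_condExp_of_le (f := f) le_rfl hm] with a hsub htower
  simp [hsub, htower]

theorem condExp_mul_sub_condExp_ae_eq_zero (hm'm : m' ≤ m) (hm : m ≤ m₀)
    [SigmaFinite (μ.trim hm)] {h f : Ω → ℝ} (hh : StronglyMeasurable[m] h) (hf : Integrable f μ)
    (hhf : Integrable (h * (f - μ[f|m])) μ) : μ[h * (f - μ[f|m])|m'] =ᵐ[μ] 0 := by
  have hcond : μ[h * (f - μ[f|m])|m] =ᵐ[μ] 0 := by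
    filter_upwards [condExp_mul_of_stronglyMeasurable_left hh hhf (hf.sub integrable_condExp),
      condExp_sub_condExp_ae_eq_zero hm hf] with a hpull hzero
    simp [hpull, hzero]
  calc μ[h * (f - μ[f|m])|m'] =ᵐ[μ] μ[μ[h * (f - μ[f|m])|m]|m'] :=
        (condExp_condExp_of_le hm'm hm).symm
    _ =ᵐ[μ] μ[(0 : Ω → ℝ)|m'] := condExp_congr_ae hcond
    _ = 0 := condExp_zero

theorem integral_abs_condExp_sub_condExp_le {f₁ f₂ r : Ω → ℝ} (hf₁ : Integrable f₁ μ)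
    (hf₂ : Integrable f₂ μ) (hr : Integrable r μ) (h : μ[f₁ - f₂ - r|m] =ᵐ[μ] 0) :
    ∫ a, |μ[f₁|m] a - μ[f₂|m] a| ∂μ ≤ ∫ a, |r a| ∂μ := by
  have hdiff : μ[f₁|m] - μ[f₂|m] =ᵐ[μ] μ[r|m] := by
    have hsplit : f₁ - f₂ = (f₁ - f₂ - r) + r := by abel
    filter_upwards [condExp_sub hf₁ hf₂ m, condExp_add ((hf₁.sub hf₂).sub hr) hr m, h]
      with a hsub hadd h0
    simp only [Pi.sub_apply, Pi.add_apply, Pi.zero_apply] at hsub hadd h0 ⊢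
    rw [← hsub, hsplit, hadd, h0, zero_add]
  calc ∫ a, |μ[f₁|m] a - μ[f₂|m] a| ∂μ = ∫ a, |μ[r|m] a| ∂μ :=
        integral_congr_ae (hdiff.fun_comp abs)
    _ ≤ ∫ a, |r a| ∂μ := integral_abs_condExp_le r

end CondExp

theorem stmt9_general {Ω : Type*} [F : MeasurableSpace Ω] {μ : Measure Ω} [IsProbabilityMeasure μ]
    (mz mx : MeasurableSpace Ω) (hzx : mz ≤ mx) (hmx : mx ≤ F)
    (ω' : Ω → ℝ) (hω2 : MemLp ω' 2 μ)
    (g : ℝ → ℝ) (τ : ℝ) (hg : ContDiff ℝ 2 g)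
    (hτ : ∀ w, |deriv (deriv g) w| ≤ τ)
    (hgω : Integrable (fun a => g (ω' a)) μ)
    (hgW : Integrable (fun a => g (ce mx μ ω' a)) μ) :
    ∫ a, |ce mz μ (fun b => g (ω' b)) a - ce mz μ (fun b => g (ce mx μ ω' b)) a| ∂μ
      ≤ τ * ∫ a, (ω' a - ce mx μ ω' a) ^ 2 ∂μ := by
  unfold ce at hgW ⊢
  set W := μ[ω'|mx]
  have hg' : Differentiable ℝ (deriv g) := hg.differentiable_deriv_two
  have hζ : MemLp (ω' - W) 2 μ := hω2.sub (hω2.condExp one_le_two)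
  set r : Ω → ℝ := fun a => g (ω' a) - g (W a) - deriv g (W a) * (ω' a - W a)
  have hr_le (a : Ω) : |r a| ≤ τ * (ω' a - W a) ^ 2 :=
    abs_sub_sub_deriv_mul_le (hg.differentiable two_ne_zero) hg' hτ _ _
  have hr : Integrable r μ := by
    refine (hζ.integrable_sq.const_mul τ).mono' ?_ (ae_of_all _ hr_le)
    exact (hgω.1.sub hgW.1).sub
      ((hg'.continuous.comp_aestronglyMeasurable (hω2.condExp one_le_two).1).mul hζ.1)
  have hlin : (fun a => g (ω' a)) - (fun a => g (W a)) - r = (deriv g ∘ W) * (ω' - W) := by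
    ext a
    simp only [r, Pi.sub_apply, Pi.mul_apply, Function.comp_apply]
    ring
  have horth : μ[(fun a => g (ω' a)) - (fun a => g (W a)) - r|mz] =ᵐ[μ] 0 := by
    rw [hlin]
    exact condExp_mul_sub_condExp_ae_eq_zero hzx hmx
      (hg'.continuous.comp_stronglyMeasurable stronglyMeasurable_condExp)
      (hω2.integrable one_le_two) (hlin ▸ (hgω.sub hgW).sub hr)
  calc _ ≤ ∫ a, |r a| ∂μ := integral_abs_condExp_sub_condExp_le hgω hgW hr horth
    _ ≤ ∫ a, τ * (ω' a - W a) ^ 2 ∂μ := integral_mono hr.abs (hζ.integrable_sq.const_mul τ) hr_le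
    _ = τ * ∫ a, (ω' a - W a) ^ 2 ∂μ := integral_const_mul τ _

/-- Second-order bound: σ(z) ⊆ σ(x'), g twice continuously differentiable with
|g''| ≤ τ, ζ = ω' − E[ω'|x'] square-integrable: then
E[|E[g(ω')|z] − E[g(E[ω'|x'])|z]|] ≤ τ·E[ζ²]. -/
theorem stmt9 {Ω : Type*} [F : MeasurableSpace Ω] {μ : Measure Ω} [IsProbabilityMeasure μ]
    (mz mx : MeasurableSpace Ω) (hzx : mz ≤ mx) (hmx : mx ≤ F)
    (ω' : Ω → ℝ) (hω'm : Measurable[F] ω') (hω2 : MemLp ω' 2 μ)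
    (g : ℝ → ℝ) (τ : ℝ) (hg : ContDiff ℝ 2 g)
    (hτ : ∀ w, |deriv (deriv g) w| ≤ τ)
    (hgω : Integrable (fun a => g (ω' a)) μ)
    (hgW : Integrable (fun a => g (ce mx μ ω' a)) μ) :
    ∫ a, |ce mz μ (fun b => g (ω' b)) a - ce mz μ (fun b => g (ce mx μ ω' b)) a| ∂μ
      ≤ τ * ∫ a, (ω' a - ce mx μ ω' a) ^ 2 ∂μ :=
  stmt9_general (F := F) mz mx hzx hmx ω' hω2 g τ hg hτ hgω hgW
end

section
/- Neyman orthogonality (Gateaux derivative vanishes): let σ(z) ⊆ σ(x'), let e = E[q'|x'], let W = e − F where F is σ(x')-measurable, and let g be continuously differentiable with bounded derivative. For any integrable σ(x')-measurable δ, define M(λ) = E[ A − g(W + λδ) − g'(W + λδ)·(q' − e − λδ) | z ], where A is integrable. Then M is differentiable at λ = 0 with M'(0) = 0 a.s. -/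
/-!
Writing `e = E[q' | x']`, `W = e - F'` and `Rλ = g W - g (W + λδ) + λ g'(W + λδ) δ`, the score
increment is `Rλ + (g' W - g' (W + λδ)) (q' - e)`. The second term has zero conditional expectation
given `x'`, hence given `z`, because its first factor is `σ(x')`-measurable and
`E[q' - e | x'] = 0`. `Rλ` is the error of a tangent line of `g`, so `|Rλ / λ| ≤ 2 C |δ|` and
`Rλ / λ → 0` pointwise; conditional dominated convergence then makes `E[Rλ / λ | z] → 0` a.s.
-/

open MeasureTheory Filter Topology

section TailSup

variable {u : ℕ → ℝ} {B : ℝ}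

noncomputable def tailSup (u : ℕ → ℝ) (n : ℕ) : ℝ := ⨆ k, |u (n + k)|

lemma bddAbove_range_abs_shift (hB : ∀ k, |u k| ≤ B) (n : ℕ) :
    BddAbove (Set.range fun k => |u (n + k)|) :=
  ⟨B, by rintro _ ⟨k, rfl⟩; exact hB _⟩

lemma abs_le_tailSup (hB : ∀ k, |u k| ≤ B) (n : ℕ) : |u n| ≤ tailSup u n :=
  le_ciSup (bddAbove_range_abs_shift hB n) 0

lemma tailSup_nonneg (hB : ∀ k, |u k| ≤ B) (n : ℕ) : 0 ≤ tailSup u n :=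
  (abs_nonneg _).trans (abs_le_tailSup hB n)

lemma tailSup_le (hB : ∀ k, |u k| ≤ B) (n : ℕ) : tailSup u n ≤ B :=
  ciSup_le fun _ => hB _

lemma antitone_tailSup (hB : ∀ k, |u k| ≤ B) : Antitone (tailSup u) :=
  antitone_nat_of_succ_le fun n => ciSup_le fun k => by
    have h := le_ciSup (bddAbove_range_abs_shift hB n) (k + 1)
    rwa [← add_assoc, Nat.add_right_comm] at h

lemma tendsto_tailSup (hB : ∀ k, |u k| ≤ B) (hu : Tendsto u atTop (𝓝 0)) :
    Tendsto (tailSup u) atTop (𝓝 0) := by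
  rw [Metric.tendsto_atTop] at hu ⊢
  intro ε hε
  obtain ⟨N, hN⟩ := hu (ε / 2) (half_pos hε)
  refine ⟨N, fun n hn => ?_⟩
  have hle : tailSup u n ≤ ε / 2 := ciSup_le fun k => by
    simpa [Real.dist_eq] using (hN (n + k) (by omega)).le
  rw [Real.dist_eq, sub_zero, abs_of_nonneg (tailSup_nonneg hB n)]
  linarith

end TailSup

theorem condExp_div_const {Ω : Type*} {m0 : MeasurableSpace Ω} {μ : Measure[m0] Ω}
    (f : Ω → ℝ) (c : ℝ) (m : MeasurableSpace Ω) :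
    μ[fun a => f a / c|m] =ᵐ[μ] fun a => μ[f|m] a / c := by
  simp_rw [div_eq_inv_mul]
  exact condExp_smul c⁻¹ f m

theorem ae_tendsto_condExp_zero_of_dominated {Ω : Type*} {m m0 : MeasurableSpace Ω}
    {μ : Measure[m0] Ω} (hm : m ≤ m0) [SigmaFinite (μ.trim hm)]
    {h : ℕ → Ω → ℝ} {b : Ω → ℝ} (hh : ∀ n, AEStronglyMeasurable (h n) μ) (hb : Integrable b μ)
    (hhb : ∀ n a, |h n a| ≤ b a) (hlim : ∀ a, Tendsto (h · a) atTop (𝓝 0)) :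
    ∀ᵐ a ∂μ, Tendsto (fun n => μ[h n|m] a) atTop (𝓝 0) := by
  set H : ℕ → Ω → ℝ := fun n a => tailSup (h · a) n
  have hH_le : ∀ n a, ‖H n a‖ ≤ b a := fun n a => by
    rw [Real.norm_eq_abs, abs_of_nonneg (tailSup_nonneg (hhb · a) n)]
    exact tailSup_le (hhb · a) n
  have hH_int : ∀ n, Integrable (H n) μ := fun n =>
    hb.mono' (AEMeasurable.iSup fun k => (hh (n + k)).aemeasurable.abs).aestronglyMeasurable
      (ae_of_all _ (hH_le n))
  have hH_tendsto : Tendsto (fun n => ∫ a, H n a ∂μ) atTop (𝓝 0) := by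
    simpa using tendsto_integral_of_dominated_convergence b (fun n => (hH_int n).1) hb
      (fun n => ae_of_all _ (hH_le n)) (ae_of_all _ fun a => tendsto_tailSup (hhb · a) (hlim a))
  -- the conditional expectations of the envelope decrease to 0: their integrals do
  have hG : ∀ᵐ a ∂μ, Tendsto (fun n => μ[H n|m] a) atTop (𝓝 0) := by
    have hanti : ∀ᵐ a ∂μ, ∀ n, μ[H (n + 1)|m] a ≤ μ[H n|m] a := ae_all_iff.2 fun n =>
      condExp_mono (hH_int _) (hH_int n)
        (ae_of_all _ fun a => antitone_tailSup (hhb · a) n.le_succ)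
    have hnonneg : ∀ᵐ a ∂μ, ∀ n, 0 ≤ μ[H n|m] a := ae_all_iff.2 fun n =>
      condExp_nonneg (ae_of_all _ fun a => tailSup_nonneg (hhb · a) n)
    refine tendsto_of_integral_tendsto_of_antitone (F := 0) (fun n => integrable_condExp)
      (integrable_zero _ _ _) ?_ (hanti.mono fun a ha => antitone_nat_of_succ_le ha) hnonneg
    simpa [integral_condExp hm] using hH_tendsto
  have hle : ∀ᵐ a ∂μ, ∀ n, |μ[h n|m] a| ≤ μ[H n|m] a := ae_all_iff.2 fun n => by
    have hh_int : Integrable (h n) μ := hb.mono' (hh n) (ae_of_all _ (hhb n))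
    filter_upwards [norm_condExp_le (m := m) (μ := μ) (h n), condExp_mono (m := m) hh_int.norm
      (hH_int n) (ae_of_all _ fun a => abs_le_tailSup (hhb · a) n)] with a h1 h2
    exact h1.trans h2
  filter_upwards [hG, hle] with a hGa hlea
  exact squeeze_zero_norm hlea hGa

section LinearizationError

variable {g : ℝ → ℝ} {C : ℝ}

/-- The error at `x` of the tangent line of `g` at `x + l * d`. -/
noncomputable def linearizationError (g : ℝ → ℝ) (x d l : ℝ) : ℝ :=
  g x - g (x + l * d) + l * (deriv g (x + l * d) * d)

lemma abs_linearizationError_div_le (hg : Differentiable ℝ g) (hC : ∀ w, |deriv g w| ≤ C)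
    (x d l : ℝ) : |linearizationError g x d l / l| ≤ 2 * C * |d| := by
  have hC0 : 0 ≤ C := (abs_nonneg _).trans (hC 0)
  rcases eq_or_ne l 0 with rfl | hl
  · simp only [div_zero, abs_zero]; positivity
  have hlip : |g x - g (x + l * d)| ≤ C * |l * d| := by
    simpa [Real.norm_eq_abs, abs_sub_comm] using
      Convex.norm_image_sub_le_of_norm_deriv_le (fun w _ => hg w) (fun w _ => hC w)
        convex_univ (Set.mem_univ x) (Set.mem_univ (x + l * d))
  have hlin : |l * (deriv g (x + l * d) * d)| ≤ C * |l * d| :=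
    calc |l * (deriv g (x + l * d) * d)| = |deriv g (x + l * d)| * |l * d| := by
          rw [abs_mul, abs_mul, abs_mul]; ring
      _ ≤ C * |l * d| := by gcongr; exact hC _
  rw [abs_div, div_le_iff₀ (abs_pos.2 hl)]
  calc |linearizationError g x d l| ≤ C * |l * d| + C * |l * d| :=
        (abs_add_le _ _).trans (add_le_add hlip hlin)
    _ = 2 * C * |d| * |l| := by rw [abs_mul]; ring

lemma tendsto_linearizationError_div {x : ℝ} (hgx : DifferentiableAt ℝ g x)
    (hg' : ContinuousAt (deriv g) x) (d : ℝ) :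
    Tendsto (fun l => linearizationError g x d l / l) (𝓝[≠] 0) (𝓝 0) := by
  have hslope : Tendsto (fun l => l⁻¹ * (g (x + l * d) - g x)) (𝓝[≠] 0) (𝓝 (deriv g x * d)) := by
    have hinner : HasDerivAt (fun l : ℝ => x + l * d) d 0 := by
      simpa using ((hasDerivAt_id (0 : ℝ)).mul_const d).const_add x
    have hgx' : HasDerivAt g (deriv g x) (x + 0 * d) := by simpa using hgx.hasDerivAt
    simpa using hasDerivAt_iff_tendsto_slope_zero.1 (hgx'.comp 0 hinner)
  have hderiv : Tendsto (fun l => deriv g (x + l * d) * d) (𝓝[≠] 0) (𝓝 (deriv g x * d)) := by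
    have : Tendsto (fun l : ℝ => x + l * d) (𝓝 0) (𝓝 x) := by
      simpa using ((continuous_mul_const d).const_add x).tendsto 0
    exact ((hg'.tendsto.comp this).mul_const d).mono_left nhdsWithin_le_nhds
  have := hslope.neg.add hderiv
  rw [neg_add_cancel] at this
  refine this.congr' (eventually_nhdsWithin_of_forall fun l (hl : l ≠ 0) => ?_)
  simp only [linearizationError]
  field_simp
  ring

end LinearizationError

section NeymanOrthogonality

variable {Ω : Type*} {mz mx m0 : MeasurableSpace Ω} {μ : Measure[m0] Ω}

theorem condExp_mul_sub_condExp_ae_eq_zero_s11 (hzx : mz ≤ mx) (hmx : mx ≤ m0)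
    [SigmaFinite (μ.trim hmx)] {u q : Ω → ℝ} (hu : StronglyMeasurable[mx] u)
    (hq : Integrable q μ) :
    μ[fun a => u a * (q a - μ[q|mx] a)|mz] =ᵐ[μ] 0 := by
  by_cases huq : Integrable (fun a => u a * (q a - μ[q|mx] a)) μ
  swap
  · rw [condExp_of_not_integrable huq]
  have hproj : μ[fun a => q a - μ[q|mx] a|mx] =ᵐ[μ] 0 := by
    refine (condExp_sub hq integrable_condExp mx).trans ?_
    rw [condExp_of_stronglyMeasurable hmx stronglyMeasurable_condExp integrable_condExp, sub_self]
  calc μ[fun a => u a * (q a - μ[q|mx] a)|mz]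
      =ᵐ[μ] μ[μ[u * (q - μ[q|mx])|mx]|mz] := (condExp_condExp_of_le hzx hmx).symm
    _ =ᵐ[μ] μ[0|mz] := condExp_congr_ae <|
        (condExp_mul_of_stronglyMeasurable_left hu huq (hq.sub integrable_condExp)).trans
          (by filter_upwards [hproj] with a ha; simp [Pi.mul_apply, ha])
    _ = 0 := condExp_zero

variable {g : ℝ → ℝ} {C : ℝ} {A q W δ : Ω → ℝ}

lemma integrable_deriv_comp_mul (hg' : Continuous (deriv g)) (hC : ∀ w, |deriv g w| ≤ C)
    {X f : Ω → ℝ} (hX : AEStronglyMeasurable X μ) (hf : Integrable f μ) :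
    Integrable (fun a => deriv g (X a) * f a) μ :=
  hf.bdd_mul (hg'.comp_aestronglyMeasurable hX) (ae_of_all _ fun _ => hC _)

lemma integrable_linearizationError (hg' : Continuous (deriv g)) (hC : ∀ w, |deriv g w| ≤ C)
    (hW : AEStronglyMeasurable W μ) (hδ : Integrable δ μ)
    (hgint : ∀ l : ℝ, Integrable (fun a => g (W a + l * δ a)) μ) (l : ℝ) :
    Integrable (fun a => linearizationError g (W a) (δ a) l) μ :=
  ((show Integrable (fun a => g (W a)) μ by simpa using hgint 0).sub (hgint l)).add
    ((integrable_deriv_comp_mul hg' hC (hW.add (hδ.1.const_mul l)) hδ).const_mul l)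

noncomputable def neymanScore (g : ℝ → ℝ) (A q e W δ : Ω → ℝ) (l : ℝ) (a : Ω) : ℝ :=
  A a - g (W a + l * δ a) - deriv g (W a + l * δ a) * (q a - e a - l * δ a)

theorem condExp_neymanScore_sub_ae_eq (hzx : mz ≤ mx) (hmx : mx ≤ m0)
    [SigmaFinite (μ.trim hmx)] (hq : Integrable q μ) (hA : Integrable A μ)
    (hW : StronglyMeasurable[mx] W) (hδm : StronglyMeasurable[mx] δ) (hδ : Integrable δ μ)
    (hg' : Continuous (deriv g)) (hC : ∀ w, |deriv g w| ≤ C)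
    (hgint : ∀ l : ℝ, Integrable (fun a => g (W a + l * δ a)) μ) (l : ℝ) :
    μ[neymanScore g A q μ[q|mx] W δ l|mz] - μ[neymanScore g A q μ[q|mx] W δ 0|mz]
      =ᵐ[μ] μ[fun a => linearizationError g (W a) (δ a) l|mz] := by
  have hX : ∀ l : ℝ, StronglyMeasurable[mx] (fun a => W a + l * δ a) :=
    fun l => hW.add (hδm.const_mul l)
  have hqe : Integrable (fun a => q a - μ[q|mx] a) μ := hq.sub integrable_condExp
  have hscore : ∀ l, Integrable (neymanScore g A q μ[q|mx] W δ l) μ := fun l =>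
    (hA.sub (hgint l)).sub <| integrable_deriv_comp_mul hg' hC
      ((hX l).mono hmx).aestronglyMeasurable (hqe.sub (hδ.const_mul l))
  set u := fun a => deriv g (W a) - deriv g (W a + l * δ a)
  have hv : Integrable (fun a => u a * (q a - μ[q|mx] a)) μ := by
    refine ((integrable_deriv_comp_mul hg' hC (hW.mono hmx).aestronglyMeasurable hqe).sub
      (integrable_deriv_comp_mul hg' hC ((hX l).mono hmx).aestronglyMeasurable hqe)).congr
      (ae_of_all _ fun a => ?_)
    simp only [u, Pi.sub_apply]
    rw [sub_mul]
  have hsplit : neymanScore g A q μ[q|mx] W δ l - neymanScore g A q μ[q|mx] W δ 0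
      = (fun a => linearizationError g (W a) (δ a) l) + fun a => u a * (q a - μ[q|mx] a) := by
    funext a
    simp only [neymanScore, linearizationError, u, Pi.add_apply, Pi.sub_apply, zero_mul, add_zero,
      sub_zero]
    ring
  calc μ[neymanScore g A q μ[q|mx] W δ l|mz] - μ[neymanScore g A q μ[q|mx] W δ 0|mz]
      =ᵐ[μ] μ[neymanScore g A q μ[q|mx] W δ l - neymanScore g A q μ[q|mx] W δ 0|mz] :=
        (condExp_sub (hscore l) (hscore 0) mz).symm
    _ =ᵐ[μ] μ[fun a => linearizationError g (W a) (δ a) l|mz]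
          + μ[fun a => u a * (q a - μ[q|mx] a)|mz] := by
        rw [hsplit]
        exact condExp_add (integrable_linearizationError hg' hC (hW.mono hmx).aestronglyMeasurable
          hδ hgint l) hv mz
    _ =ᵐ[μ] μ[fun a => linearizationError g (W a) (δ a) l|mz] := by
        filter_upwards [condExp_mul_sub_condExp_ae_eq_zero_s11 (u := u) hzx hmx
          ((hg'.comp_stronglyMeasurable hW).sub (hg'.comp_stronglyMeasurable (hX l))) hq]
          with a ha
        rw [Pi.add_apply, ha, Pi.zero_apply, add_zero]

end NeymanOrthogonality

/-- Neyman orthogonality: with σ(z) ⊆ σ(x'), e = E[q'|x'], W = e − F'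
(F' σ(x')-measurable), g continuously differentiable with bounded derivative, and δ an
integrable σ(x')-measurable direction, define
M(λ) = E[A − g(W + λδ) − g'(W + λδ)·(q' − e − λδ) | z]. Then the Gateaux derivative of M
at λ = 0 is zero: along any nonzero sequence λₙ → 0, the difference quotients tend a.s. to 0. -/
theorem stmt11 {Ω : Type*} [mΩ : MeasurableSpace Ω] {μ : Measure Ω} [IsProbabilityMeasure μ]
    (mz mx : MeasurableSpace Ω) (hzx : mz ≤ mx) (hmx : mx ≤ mΩ)
    (q' A F' δ : Ω → ℝ) (hq' : Integrable q' μ) (hA : Integrable A μ)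
    (hF' : StronglyMeasurable[mx] F') (hδm : StronglyMeasurable[mx] δ)
    (hδ : Integrable δ μ)
    (g : ℝ → ℝ) (hg : ContDiff ℝ 1 g) (C : ℝ) (hg' : ∀ w, |deriv g w| ≤ C)
    (hgint : ∀ l : ℝ, Integrable (fun a => g (ce mx μ q' a - F' a + l * δ a)) μ)
    (M : ℝ → Ω → ℝ)
    (hM : ∀ l, M l = ce mz μ (fun a => A a - g (ce mx μ q' a - F' a + l * δ a)
        - deriv g (ce mx μ q' a - F' a + l * δ a)
            * (q' a - ce mx μ q' a - l * δ a))) :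
    ∀ lseq : ℕ → ℝ, (∀ n, lseq n ≠ 0) → Tendsto lseq atTop (nhds 0) →
      ∀ᵐ a ∂μ, Tendsto (fun n => (M (lseq n) a - M 0 a) / lseq n) atTop (nhds 0) := by
  intro lseq hne hlim
  have hgd : Differentiable ℝ g := hg.differentiable one_ne_zero
  have hg'c : Continuous (deriv g) := hg.continuous_deriv le_rfl
  set W : Ω → ℝ := fun a => μ[q'|mx] a - F' a
  have hW : StronglyMeasurable[mx] W := stronglyMeasurable_condExp.sub hF'
  have hR : ∀ l, Integrable (fun a => linearizationError g (W a) (δ a) l) μ :=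
    integrable_linearizationError hg'c hg' (hW.mono hmx).aestronglyMeasurable hδ hgint
  have hMscore : ∀ l, M l = μ[neymanScore g A q' μ[q'|mx] W δ l|mz] := hM
  have hquot : ∀ n, (fun a => (M (lseq n) a - M 0 a) / lseq n)
      =ᵐ[μ] μ[fun a => linearizationError g (W a) (δ a) (lseq n) / lseq n|mz] := by
    intro n
    filter_upwards [condExp_neymanScore_sub_ae_eq hzx hmx hq' hA hW hδm hδ hg'c hg' hgint (lseq n),
      condExp_div_const (fun a => linearizationError g (W a) (δ a) (lseq n)) (lseq n) mz]
      with a h1 h2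
    rw [hMscore, hMscore, h2, ← h1, Pi.sub_apply]
  have hlseq : Tendsto lseq atTop (𝓝[≠] 0) := tendsto_nhdsWithin_iff.2 ⟨hlim, .of_forall hne⟩
  filter_upwards [ae_tendsto_condExp_zero_of_dominated (hzx.trans hmx)
    (fun n => ((hR (lseq n)).div_const (lseq n)).1) (hδ.abs.const_mul (2 * C))
    (fun n a => abs_linearizationError_div_le hgd hg' _ _ _)
    (fun a => (tendsto_linearizationError_div (hgd _) hg'c.continuousAt _).comp hlseq),
    ae_all_iff.2 hquot] with a h1 h2
  exact h1.congr fun n => (h2 n).symm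
end

section
/- Linear law of motion makes the feasible moment valid: suppose q = f⁰ + ω + ε, q' = f⁰' + ω' + ε' with E[ε' | x'] = 0, E[ξ + ε | z] = 0 where ξ = ω − ρω', σ(z) ⊆ σ(x'), f⁰ σ(z)-measurable and f⁰' σ(x')-measurable. Then E[q − f⁰ − ρ(E[q'|x'] − f⁰') | z] = 0 a.s. -/
open MeasureTheory Filter

/-- Linear law of motion makes the feasible moment valid: q = f⁰ + ω + ε,
q' = f⁰' + ω' + ε', E[ε'|x'] = 0 a.s., E[ω − ρω' + ε|z] = 0 a.s., σ(z) ⊆ σ(x'): then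
E[q − f⁰ − ρ(E[q'|x'] − f⁰')|z] = 0 a.s. -/
theorem stmt15 {Ω : Type*} [F : MeasurableSpace Ω] {μ : Measure Ω} [IsProbabilityMeasure μ]
    (mz mx : MeasurableSpace Ω) (hzx : mz ≤ mx) (hmx : mx ≤ F)
    (q q' ω ω' ε ε' f0 f0' : Ω → ℝ) (ρ : ℝ)
    (hωi : Integrable ω μ) (hω'i : Integrable ω' μ)
    (hεi : Integrable ε μ) (hε'i : Integrable ε' μ)
    (hf0i : Integrable f0 μ) (hf0'i : Integrable f0' μ)
    (hf0 : StronglyMeasurable[mz] f0) (hf0' : StronglyMeasurable[mx] f0')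
    (hq : q = f0 + ω + ε) (hq' : q' = f0' + ω' + ε')
    (hε' : ce mx μ ε' =ᵐ[μ] 0)
    (hmom : ce mz μ (fun a => ω a - ρ * ω' a + ε a) =ᵐ[μ] 0) :
    ce mz μ (fun a => q a - f0 a - ρ * (ce mx μ q' a - f0' a)) =ᵐ[μ] 0 := by
  unfold ce at *
  -- Step 1: μ[q'|mx] =ᵐ f0' + μ[ω'|mx]
  have h1 : μ[q'|mx] =ᵐ[μ] f0' + μ[ω'|mx] := by
    have := condExp_add (μ := μ) (m := mx) (hf0'i.add hω'i) hε'i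
    rw [hq']
    refine this.trans ?_
    have h2 := condExp_add (μ := μ) (m := mx) hf0'i hω'i
    have h3 := condExp_of_stronglyMeasurable hmx hf0' hf0'i
    filter_upwards [h2, hε'] with a ha hb
    simp only [Pi.add_apply] at ha ⊢
    rw [ha, h3]
    simp [hb]
  -- Step 2: the integrand equals ω + ε - ρ • (μ[ω'|mx]) a.e.
  have hinteg : (fun a => q a - f0 a - ρ * ((μ[q'|mx]) a - f0' a)) =ᵐ[μ]
      (fun a => (ω a - ρ * ((μ[ω'|mx]) a) + ε a)) := by
    filter_upwards [h1] with a ha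
    rw [hq]
    simp only [Pi.add_apply] at ha ⊢
    rw [ha]; ring
  have hstep := condExp_congr_ae (m := mz) hinteg
  refine hstep.trans ?_
  -- Step 3: rewrite as (ω - ρω' + ε) + ρ*(ω' - μ[ω'|mx])
  have hcei : Integrable (μ[ω'|mx]) μ := integrable_condExp
  have heq : (fun a => (ω a - ρ * ((μ[ω'|mx]) a) + ε a)) =
      (fun a => (ω a - ρ * ω' a + ε a)) + (ρ • (ω' - μ[ω'|mx])) := by
    funext a; simp [smul_eq_mul]; ring
  rw [heq]
  have hi1 : Integrable (fun a => ω a - ρ * ω' a + ε a) μ := by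
    exact ((hωi.sub (hω'i.const_mul ρ)).add hεi)
  have hi2 : Integrable (ρ • (ω' - μ[ω'|mx])) μ := ((hω'i.sub hcei).smul ρ)
  have hadd := condExp_add (μ := μ) (m := mz) hi1 hi2
  refine hadd.trans ?_
  have hsmul := condExp_smul (μ := μ) (m := mz) ρ (ω' - μ[ω'|mx])
  have hsub := condExp_sub (μ := μ) (m := mz) hω'i hcei
  have htower := condExp_condExp_of_le (μ := μ) hzx hmx (f := ω')
  filter_upwards [hmom, hadd, hsmul, hsub, htower] with a ha hb hc hd he
  simp only [Pi.add_apply, Pi.smul_apply, Pi.sub_apply, smul_eq_mul] at *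
  rw [ha, hc, hd, he]
  simp
end

section
/- Failure of the moment when the instrument is not in the first-stage conditioning set: if g(w) = ρw with ρ ≠ 0, and E[ξ + ε | z] = 0, then the feasible moment E[q − f⁰ − ρ(E[q'|x'] − f⁰') | z] equals ρ·E[ζ' | z] a.s., where ζ' = ω' − E[ω'|x']; in particular the moment is zero a.s. if and only if E[ζ' | z] = 0 a.s. -/
open MeasureTheory Filter

/-
Since `f⁰'` is `x'`-measurable and `E[ε' | x'] = 0`, the first stage recovers
`E[q' | x'] = f⁰' + E[ω' | x']`. Substituting, the feasible integrand is
`(ω − ρω' + ε) + ρ ζ'`; the first summand has zero conditional mean given `z`, so the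
moment is `ρ E[ζ' | z]`, which vanishes exactly when `E[ζ' | z]` does because `ρ ≠ 0`.
-/

section CondExp

variable {Ω : Type*} {m m₀ : MeasurableSpace Ω} {μ : Measure[m₀] Ω}

theorem condExp_add_add_ae_eq_of_condExp_ae_eq_zero (hm : m ≤ m₀) [SigmaFinite (μ.trim hm)]
    {f g h : Ω → ℝ} (hf : StronglyMeasurable[m] f) (hfi : Integrable f μ)
    (hgi : Integrable g μ) (hhi : Integrable h μ) (hh : μ[h | m] =ᵐ[μ] 0) :
    μ[f + g + h | m] =ᵐ[μ] f + μ[g | m] := by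
  filter_upwards [condExp_add (hfi.add hgi) hhi m, condExp_add hfi hgi m, hh] with a hfgh hfg hha
  rw [hfgh, Pi.add_apply, hfg, hha, Pi.add_apply, Pi.add_apply,
    condExp_of_stronglyMeasurable hm hf hfi, Pi.zero_apply, add_zero]

theorem condExp_add_const_mul_ae_eq_of_condExp_ae_eq_zero {g h : Ω → ℝ} (c : ℝ)
    (hgi : Integrable g μ) (hhi : Integrable h μ) (hg : μ[g | m] =ᵐ[μ] 0) :
    μ[fun a => g a + c * h a | m] =ᵐ[μ] fun a => c * μ[h | m] a := by
  change μ[g + c • h | m] =ᵐ[μ] c • μ[h | m]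
  filter_upwards [condExp_add hgi (hhi.smul c) m, condExp_smul c h m, hg] with a hadd hsmul hga
  rw [hadd, Pi.add_apply, hga, hsmul, Pi.zero_apply, zero_add]

end CondExp

theorem Filter.const_mul_eventuallyEq_zero_iff {α : Type*} {l : Filter α} {f : α → ℝ} {c : ℝ}
    (hc : c ≠ 0) : (fun a => c * f a) =ᶠ[l] 0 ↔ f =ᶠ[l] 0 := by
  simp only [EventuallyEq, Pi.zero_apply, mul_eq_zero, hc, false_or]

theorem stmt16_general {Ω : Type*} [F : MeasurableSpace Ω] {μ : Measure Ω} [IsProbabilityMeasure μ]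
    (mz mx : MeasurableSpace Ω) (hmx : mx ≤ F)
    (q q' ω ω' ε ε' f0 f0' : Ω → ℝ) (ρ : ℝ) (hρ : ρ ≠ 0)
    (hωi : Integrable ω μ) (hω'i : Integrable ω' μ)
    (hεi : Integrable ε μ) (hε'i : Integrable ε' μ)
    (hf0'i : Integrable f0' μ)
    (hf0' : StronglyMeasurable[mx] f0')
    (hq : q = f0 + ω + ε) (hq' : q' = f0' + ω' + ε')
    (hε' : ce mx μ ε' =ᵐ[μ] 0)
    (hmom : ce mz μ (fun a => ω a - ρ * ω' a + ε a) =ᵐ[μ] 0) :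
    (ce mz μ (fun a => q a - f0 a - ρ * (ce mx μ q' a - f0' a))
        =ᵐ[μ] fun a => ρ * ce mz μ (fun b => ω' b - ce mx μ ω' b) a)
    ∧ ((ce mz μ (fun a => q a - f0 a - ρ * (ce mx μ q' a - f0' a)) =ᵐ[μ] 0)
        ↔ ce mz μ (fun b => ω' b - ce mx μ ω' b) =ᵐ[μ] 0) := by
  unfold ce at *
  have first_stage : μ[q' | mx] =ᵐ[μ] f0' + μ[ω' | mx] := hq' ▸
    condExp_add_add_ae_eq_of_condExp_ae_eq_zero hmx hf0' hf0'i hω'i hε'i hε'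
  have integrand_eq : (fun a => q a - f0 a - ρ * (μ[q' | mx] a - f0' a)) =ᵐ[μ]
      fun a => (ω a - ρ * ω' a + ε a) + ρ * (ω' a - μ[ω' | mx] a) := by
    filter_upwards [first_stage] with a ha
    rw [hq, ha, Pi.add_apply, Pi.add_apply, Pi.add_apply]
    ring
  have moment_eq := (condExp_congr_ae integrand_eq).trans <|
    condExp_add_const_mul_ae_eq_of_condExp_ae_eq_zero ρ
      ((hωi.sub (hω'i.const_mul ρ)).add hεi) (hω'i.sub integrable_condExp) hmom
  exact ⟨moment_eq, moment_eq.congr_left.trans (const_mul_eventuallyEq_zero_iff hρ)⟩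

/-- Failure of the moment when the instrument is not in the first-stage
conditioning set: with g(w) = ρw, ρ ≠ 0, and E[ξ + ε|z] = 0, the feasible moment
E[q − f⁰ − ρ(E[q'|x'] − f⁰')|z] equals ρ·E[ζ'|z] a.s. where ζ' = ω' − E[ω'|x']; in
particular it is zero a.s. iff E[ζ'|z] = 0 a.s. -/
theorem stmt16 {Ω : Type*} [F : MeasurableSpace Ω] {μ : Measure Ω} [IsProbabilityMeasure μ]
    (mz mx : MeasurableSpace Ω) (hmz : mz ≤ F) (hmx : mx ≤ F)
    (q q' ω ω' ε ε' f0 f0' : Ω → ℝ) (ρ : ℝ) (hρ : ρ ≠ 0)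
    (hωi : Integrable ω μ) (hω'i : Integrable ω' μ)
    (hεi : Integrable ε μ) (hε'i : Integrable ε' μ)
    (hf0i : Integrable f0 μ) (hf0'i : Integrable f0' μ)
    (hf0 : StronglyMeasurable[mz] f0) (hf0' : StronglyMeasurable[mx] f0')
    (hq : q = f0 + ω + ε) (hq' : q' = f0' + ω' + ε')
    (hε' : ce mx μ ε' =ᵐ[μ] 0)
    (hmom : ce mz μ (fun a => ω a - ρ * ω' a + ε a) =ᵐ[μ] 0) :
    (ce mz μ (fun a => q a - f0 a - ρ * (ce mx μ q' a - f0' a))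
        =ᵐ[μ] fun a => ρ * ce mz μ (fun b => ω' b - ce mx μ ω' b) a)
    ∧ ((ce mz μ (fun a => q a - f0 a - ρ * (ce mx μ q' a - f0' a)) =ᵐ[μ] 0)
        ↔ ce mz μ (fun b => ω' b - ce mx μ ω' b) =ᵐ[μ] 0) :=
  stmt16_general (F := F) mz mx hmx q q' ω ω' ε ε' f0 f0' ρ hρ hωi hω'i hεi hε'i hf0'i hf0' hq hq'
    hε' hmom
end
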